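/- For every finite simple graph G, the co-even domination number of the 3-subdivision of G equals the number of vertices of G: γ_coe(G^{1/3}) = |V(G)|. -/
import Mathlib


open scoped Classical

/-- `D` is a dominating set of `G`. -/
def IsDomSet {V : Type*} (G : SimpleGraph V) (D : Finset V) : Prop :=
  ∀ v ∉ D, ∃ u ∈ D, G.Adj u v

/-- `D` is a co-even dominating set of `G`. -/
def IsCoevenDomSet {V : Type*} [Fintype V] (G : SimpleGraph V) (D : Finset V) : Prop :=
  IsDomSet G D ∧ ∀ v ∉ D, Even (G.degree v)

/-- The domination number of `G`. -/
noncomputable def domNum {V : Type*} [Fintype V] (G : SimpleGraph V) : ℕ :=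
  sInf {n | ∃ D : Finset V, IsDomSet G D ∧ D.card = n}

/-- The co-even domination number of `G`. -/
noncomputable def coevenDomNum {V : Type*} [Fintype V] (G : SimpleGraph V) : ℕ :=
  sInf {n | ∃ D : Finset V, IsCoevenDomSet G D ∧ D.card = n}

/-- Base relation for the k-subdivision of G: each edge e of G, with endpoints
a < b (in the linear order on V), is replaced by the path
a, (e,0), (e,1), ..., (e,k-2), b of length k. -/
def subdivRel {V : Type*} [LinearOrder V] (G : SimpleGraph V) (k : ℕ) :
    (V ⊕ (G.edgeSet × Fin (k - 1))) → (V ⊕ (G.edgeSet × Fin (k - 1))) → Prop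
  | Sum.inl a, Sum.inl b => k = 1 ∧ G.Adj a b
  | Sum.inl a, Sum.inr (e, i) =>
      a ∈ (e : Sym2 V) ∧
        ((i.val = 0 ∧ ∀ b ∈ (e : Sym2 V), a ≤ b) ∨
          (i.val = k - 2 ∧ ∀ b ∈ (e : Sym2 V), b ≤ a))
  | Sum.inr _, Sum.inl _ => False
  | Sum.inr (e, i), Sum.inr (f, j) => e = f ∧ j.val = i.val + 1

/-- The k-subdivision of G: every edge of G is replaced by a path of length k
through k - 1 new internal vertices, the internal vertices of distinct edges
being pairwise disjoint. -/
def kSubdivision {V : Type*} [LinearOrder V] (G : SimpleGraph V) (k : ℕ) :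
    SimpleGraph (V ⊕ (G.edgeSet × Fin (k - 1))) :=
  SimpleGraph.fromRel (subdivRel G k)

section Aux
variable {V : Type*} [Fintype V] [LinearOrder V] (G : SimpleGraph V)

lemma edge_rep (e : G.edgeSet) : ∃ a b : V, a < b ∧ (e : Sym2 V) = s(a, b) := by
  obtain ⟨e, he⟩ := e
  induction e using Sym2.ind with
  | _ x y =>
    rw [SimpleGraph.mem_edgeSet] at he
    rcases lt_trichotomy x y with h | h | h
    · exact ⟨x, y, h, rfl⟩
    · exact absurd h he.ne
    · exact ⟨y, x, h, Sym2.eq_swap⟩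

lemma adj_inl_inr (a : V) (e : G.edgeSet) (i : Fin (3 - 1)) :
    (kSubdivision G 3).Adj (Sum.inl a) (Sum.inr (e, i)) ↔
      a ∈ (e : Sym2 V) ∧ ((i.val = 0 ∧ ∀ b ∈ (e : Sym2 V), a ≤ b) ∨
        (i.val = 1 ∧ ∀ b ∈ (e : Sym2 V), b ≤ a)) := by
  simp [kSubdivision, SimpleGraph.fromRel_adj, subdivRel]

lemma not_adj_inl_inl (a b : V) :
    ¬ (kSubdivision G 3).Adj (Sum.inl a) (Sum.inl b) := by
  simp [kSubdivision, SimpleGraph.fromRel_adj, subdivRel]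

lemma adj_inr_inr (e f : G.edgeSet) (i j : Fin (3 - 1)) :
    (kSubdivision G 3).Adj (Sum.inr (e, i)) (Sum.inr (f, j)) ↔
      e = f ∧ (j.val = i.val + 1 ∨ i.val = j.val + 1) := by
  simp only [kSubdivision, SimpleGraph.fromRel_adj, subdivRel, ne_eq]
  constructor
  · rintro ⟨-, h | h⟩
    · exact ⟨h.1, Or.inl h.2⟩
    · exact ⟨h.1.symm, Or.inr h.2⟩
  · rintro ⟨rfl, h | h⟩
    · exact ⟨by simp [Prod.ext_iff]; omega, Or.inl ⟨rfl, h⟩⟩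
    · exact ⟨by simp [Prod.ext_iff]; omega, Or.inr ⟨rfl, h⟩⟩

end Aux
set_option linter.unusedSectionVars false
section Aux2
variable {V : Type*} [Fintype V] [LinearOrder V] (G : SimpleGraph V)

lemma deg_inr (e : G.edgeSet) (i : Fin (3 - 1)) :
    (kSubdivision G 3).degree (Sum.inr (e, i)) = 2 := by
  obtain ⟨a, b, hab, he⟩ := edge_rep G e
  rcases i with ⟨iv, hi⟩
  interval_cases iv
  · have hns : (kSubdivision G 3).neighborFinset (Sum.inr (e, ⟨0, hi⟩)) =
        {Sum.inl a, Sum.inr (e, ⟨1, by omega⟩)} := by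
      ext u
      rw [SimpleGraph.mem_neighborFinset]
      cases u with
      | inl c =>
        rw [(kSubdivision G 3).adj_comm, adj_inl_inr]
        simp only [he, Sym2.mem_iff, Finset.mem_insert, Finset.mem_singleton,
          Sum.inl.injEq, reduceCtorEq, or_false]
        constructor
        · rintro ⟨hc | rfl, ⟨-, h⟩ | ⟨h, -⟩⟩
          · exact hc
          · exact h.elim
          · exact absurd (h a (Or.inl rfl)) (not_le.2 hab)
          · exact h.elim
        · rintro rfl
          exact ⟨Or.inl rfl, Or.inl ⟨trivial, by rintro x (rfl | rfl) <;> [exact le_rfl; exact hab.le]⟩⟩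
      | inr p =>
        obtain ⟨f, j⟩ := p
        rw [adj_inr_inr]
        simp only [Finset.mem_insert, Finset.mem_singleton, reduceCtorEq, false_or,
          Sum.inr.injEq, Prod.mk.injEq]
        constructor
        · rintro ⟨rfl, h | h⟩
          · exact ⟨rfl, by rcases j with ⟨jv, hj⟩; simp only [Fin.mk.injEq]; simpa using h⟩
          · simp at h
        · rintro ⟨rfl, rfl⟩
          exact ⟨rfl, Or.inl rfl⟩
    rw [SimpleGraph.degree, hns]
    rw [Finset.card_insert_of_notMem (by simp), Finset.card_singleton]
  · have hns : (kSubdivision G 3).neighborFinset (Sum.inr (e, ⟨1, hi⟩)) =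
        {Sum.inl b, Sum.inr (e, ⟨0, by omega⟩)} := by
      ext u
      rw [SimpleGraph.mem_neighborFinset]
      cases u with
      | inl c =>
        rw [(kSubdivision G 3).adj_comm, adj_inl_inr]
        simp only [he, Sym2.mem_iff, Finset.mem_insert, Finset.mem_singleton,
          Sum.inl.injEq, reduceCtorEq, or_false]
        constructor
        · rintro ⟨hc | hc, ⟨h, -⟩ | ⟨-, h⟩⟩
          · exact h.elim
          · subst hc
            exact absurd (h b (Or.inr rfl)) (not_le.2 hab)
          · exact h.elim
          · exact hc
        · rintro rfl
          exact ⟨Or.inr rfl, Or.inr ⟨trivial, by rintro x (rfl | rfl) <;> [exact hab.le; exact le_rfl]⟩⟩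
      | inr p =>
        obtain ⟨f, j⟩ := p
        rw [adj_inr_inr]
        simp only [Finset.mem_insert, Finset.mem_singleton, reduceCtorEq, false_or,
          Sum.inr.injEq, Prod.mk.injEq]
        constructor
        · rcases j with ⟨jv, hj⟩
          rintro ⟨rfl, h | h⟩
          · exact absurd h (show ¬ jv = 1 + 1 by omega)
          · exact ⟨rfl, Fin.ext (show jv = 0 by
              have h' : 1 = jv + 1 := h; omega)⟩
        · rintro ⟨rfl, rfl⟩
          exact ⟨rfl, Or.inr rfl⟩
    rw [SimpleGraph.degree, hns]
    rw [Finset.card_insert_of_notMem (by simp), Finset.card_singleton]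

end Aux2
theorem stmt_7 {V : Type*} [Fintype V] [LinearOrder V] (G : SimpleGraph V) :
    coevenDomNum (kSubdivision G 3) = Fintype.card V := by
  classical
  set D₀ : Finset (V ⊕ (G.edgeSet × Fin (3 - 1))) := Finset.univ.image Sum.inl with hD₀
  have hD₀card : D₀.card = Fintype.card V := by
    rw [hD₀, Finset.card_image_of_injective _ Sum.inl_injective, Finset.card_univ]
  have hmem0 : ∀ a : V, Sum.inl a ∈ D₀ := fun a =>
    Finset.mem_image_of_mem _ (Finset.mem_univ a)
  have hcoe : IsCoevenDomSet (kSubdivision G 3) D₀ := by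
    constructor
    · intro v hv
      cases v with
      | inl a => exact absurd (hmem0 a) hv
      | inr p =>
        obtain ⟨e, i⟩ := p
        obtain ⟨a, b, hab, he⟩ := edge_rep G e
        have hael : a ∈ (e : Sym2 V) := by rw [he]; exact Sym2.mem_mk_left a b
        have hbel : b ∈ (e : Sym2 V) := by rw [he]; exact Sym2.mem_mk_right a b
        rcases i with ⟨iv, hi⟩
        interval_cases iv
        · refine ⟨Sum.inl a, hmem0 a, ?_⟩
          rw [adj_inl_inr]
          refine ⟨hael, Or.inl ⟨rfl, ?_⟩⟩
          intro x hx
          rw [he, Sym2.mem_iff] at hx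
          rcases hx with rfl | rfl
          · exact le_rfl
          · exact hab.le
        · refine ⟨Sum.inl b, hmem0 b, ?_⟩
          rw [adj_inl_inr]
          refine ⟨hbel, Or.inr ⟨rfl, ?_⟩⟩
          intro x hx
          rw [he, Sym2.mem_iff] at hx
          rcases hx with rfl | rfl
          · exact hab.le
          · exact le_rfl
    · intro v hv
      cases v with
      | inl a => exact absurd (hmem0 a) hv
      | inr p =>
        obtain ⟨e, i⟩ := p
        rw [deg_inr]
        exact ⟨1, rfl⟩
  have hlb : ∀ D : Finset (V ⊕ (G.edgeSet × Fin (3 - 1))),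
      IsCoevenDomSet (kSubdivision G 3) D → Fintype.card V ≤ D.card := by
    intro D hD
    have H : ∀ v : V, ∃ w, w ∈ D ∧ (w = Sum.inl v ∨ ∃ e : G.edgeSet, ∃ i : Fin (3 - 1),
        w = Sum.inr (e, i) ∧ v ∈ (e : Sym2 V) ∧
        ((i.val = 0 ∧ ∀ b ∈ (e : Sym2 V), v ≤ b) ∨
          (i.val = 1 ∧ ∀ b ∈ (e : Sym2 V), b ≤ v))) := by
      intro v
      by_cases hv : Sum.inl v ∈ D
      · exact ⟨Sum.inl v, hv, Or.inl rfl⟩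
      · obtain ⟨u, hu, hadj⟩ := hD.1 (Sum.inl v) hv
        cases u with
        | inl a => exact absurd hadj (not_adj_inl_inl G a v)
        | inr p =>
          obtain ⟨e, i⟩ := p
          rw [(kSubdivision G 3).adj_comm, adj_inl_inr] at hadj
          exact ⟨_, hu, Or.inr ⟨e, i, rfl, hadj.1, hadj.2⟩⟩
    choose f hf1 hf2 using H
    have hinj : Set.InjOn f ↑(Finset.univ : Finset V) := by
      intro v _ v' _ hvv'
      rcases hf2 v with h | ⟨e, i, hw, hv, hcond⟩ <;>
        rcases hf2 v' with h' | ⟨e', i', hw', hv', hcond'⟩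
      · rw [h, h'] at hvv'
        exact Sum.inl.inj hvv'
      · rw [h, hw'] at hvv'
        exact absurd hvv' (by simp)
      · rw [hw, h'] at hvv'
        exact absurd hvv' (by simp)
      · rw [hw, hw'] at hvv'
        simp only [Sum.inr.injEq, Prod.mk.injEq] at hvv'
        obtain ⟨rfl, rfl⟩ := hvv'
        rcases hcond with ⟨hi0, hmin⟩ | ⟨hi1, hmax⟩ <;>
          rcases hcond' with ⟨hi0', hmin'⟩ | ⟨hi1', hmax'⟩
        · exact le_antisymm (hmin v' hv') (hmin' v hv)
        · omega
        · omega
        · exact le_antisymm (hmax' v hv) (hmax v' hv')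
    calc Fintype.card V = (Finset.univ : Finset V).card := Finset.card_univ.symm
      _ ≤ D.card := Finset.card_le_card_of_injOn f (fun v _ => hf1 v) hinj
  unfold coevenDomNum
  apply le_antisymm
  · exact Nat.sInf_le ⟨D₀, hcoe, hD₀card⟩
  · refine le_csInf ⟨_, D₀, hcoe, hD₀card⟩ ?_
    rintro n ⟨D, hD, rfl⟩
    exact hlb D hD
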